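/- Let K ∈ ℝ, N ∈ (1,∞), D > 0, and assume that it is NOT the case that K > 0 and D = π√((N−1)/K) (i.e. either K ≤ 0, or K > 0 and D < π√((N−1)/K)). Then for every a ∈ (0,D), the function h^a_{K,N,D} is not a CD(K,N)-density on [0,D]. -/

import Mathlib

open MeasureTheory Filter

noncomputable section

/-- The comparison function `s_κ(θ)`:
`sin(√κ·θ)/√κ` if `κ > 0`, `θ` if `κ = 0`, `sinh(√(−κ)·θ)/√(−κ)` if `κ < 0`. -/
def sK (κ θ : ℝ) : ℝ :=
  if 0 < κ then Real.sin (Real.sqrt κ * θ) / Real.sqrt κ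
  else if κ = 0 then θ
  else Real.sinh (Real.sqrt (-κ) * θ) / Real.sqrt (-κ)

/-- `h` is an `MCP(K,N)`-density on the interval `I ⊆ ℝ`: it is a nonnegative Borel
function satisfying
`h(t·x₁+(1−t)·x₀) ≥ (s_{K/(N−1)}((1−t)|x₁−x₀|)/s_{K/(N−1)}(|x₁−x₀|))^{N−1}·h(x₀)`
for all `x₀, x₁ ∈ I`, `t ∈ [0,1]`; when `x₀ = x₁` the coefficient is interpreted as `1−t`,
and when `K > 0` and `|x₁−x₀| ≥ π√((N−1)/K)` the coefficient is `+∞`, forcing `h x₀ = 0`. -/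
def IsMCPDensity (K N : ℝ) (I : Set ℝ) (h : ℝ → ℝ) : Prop :=
  Measurable h ∧ (∀ x ∈ I, 0 ≤ h x) ∧
  ∀ x₀ ∈ I, ∀ x₁ ∈ I, ∀ t ∈ Set.Icc (0:ℝ) 1,
    (x₀ = x₁ → (1 - t) * h x₀ ≤ h x₀) ∧
    (x₀ ≠ x₁ →
      ((0 < K ∧ Real.pi * Real.sqrt ((N - 1) / K) ≤ |x₁ - x₀|) → h x₀ = 0) ∧
      (¬(0 < K ∧ Real.pi * Real.sqrt ((N - 1) / K) ≤ |x₁ - x₀|) →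
        (sK (K / (N - 1)) ((1 - t) * |x₁ - x₀|) / sK (K / (N - 1)) |x₁ - x₀|) ^ (N - 1) * h x₀
          ≤ h (t * x₁ + (1 - t) * x₀)))

/-- `h` is a `CD(K,N)`-density on the interval `I ⊆ ℝ`. -/
def IsCDDensity (K N : ℝ) (I : Set ℝ) (h : ℝ → ℝ) : Prop :=
  (∀ x ∈ I, 0 ≤ h x) ∧
  ∀ x₀ ∈ I, ∀ x₁ ∈ I, x₀ < x₁ → ∀ t ∈ Set.Icc (0:ℝ) 1,
    (sK (K / (N - 1)) ((1 - t) * (x₁ - x₀)) / sK (K / (N - 1)) (x₁ - x₀)) * h x₀ ^ (1 / (N - 1))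
      + (sK (K / (N - 1)) (t * (x₁ - x₀)) / sK (K / (N - 1)) (x₁ - x₀)) * h x₁ ^ (1 / (N - 1))
      ≤ h ((1 - t) * x₀ + t * x₁) ^ (1 / (N - 1))

/-- The lower-bound function `f_{K,N,D}`. -/
def fKND (K N D : ℝ) (x : ℝ) : ℝ :=
  if x = 0 ∨ x = D then 0
  else ((∫ y in (0:ℝ)..x, (sK (K / (N - 1)) (D - y) / sK (K / (N - 1)) (D - x)) ^ (N - 1)) +
        (∫ y in x..D, (sK (K / (N - 1)) y / sK (K / (N - 1)) x) ^ (N - 1)))⁻¹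

/-- The model density `h^a_{K,N,D}`. -/
def hKND (K N D a : ℝ) (x : ℝ) : ℝ :=
  if x ≤ a then fKND K N D a * (sK (K / (N - 1)) (D - x) / sK (K / (N - 1)) (D - a)) ^ (N - 1)
  else fKND K N D a * (sK (K / (N - 1)) x / sK (K / (N - 1)) a) ^ (N - 1)

/-- `v_{K,N,D}(a) = ∫₀ᵃ h^a_{K,N,D}(x) dx`. -/
def vKND (K N D a : ℝ) : ℝ := ∫ x in (0:ℝ)..a, hKND K N D a x

/-- The (outer) Minkowski content of `A` with respect to `μ`:
`liminf_{ε→0⁺} (μ(Aᵉ) − μ(A))/ε` where `Aᵉ` is the open `ε`-neighbourhood of `A`. -/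
def mink (μ : Measure ℝ) (A : Set ℝ) : ℝ :=
  Filter.liminf (fun ε : ℝ => ((μ (Metric.thickening ε A)).toReal - (μ A).toReal) / ε)
    (nhdsWithin 0 (Set.Ioi 0))

/-- The measure `μ_h = h · Leb` restricted to `[0,D]`. -/
def muh (h : ℝ → ℝ) (D : ℝ) : Measure ℝ :=
  (volume.restrict (Set.Icc (0:ℝ) D)).withDensity (fun x => ENNReal.ofReal (h x))

/-- The restricted one-dimensional isoperimetric profile `Ĩ_{K,N,D}(v)` over
`MCP(K,N)`-densities on `[0,D]` integrating to `1`. -/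
def Itilde (K N D v : ℝ) : ℝ :=
  sInf { p : ℝ | ∃ h : ℝ → ℝ, IsMCPDensity K N (Set.Icc 0 D) h ∧
    (∫ x in (0:ℝ)..D, h x) = 1 ∧
    ∃ A : Set ℝ, MeasurableSet A ∧ A ⊆ Set.Icc 0 D ∧ (muh h D A).toReal = v ∧
      p = mink (muh h D) A }

/-- The restricted one-dimensional isoperimetric profile `Ĩ^{CD}_{K,N,D}(v)` over
`CD(K,N)`-densities on `[0,D]` integrating to `1`. -/
def ItildeCD (K N D v : ℝ) : ℝ :=
  sInf { p : ℝ | ∃ h : ℝ → ℝ, IsCDDensity K N (Set.Icc 0 D) h ∧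
    (∫ x in (0:ℝ)..D, h x) = 1 ∧
    ∃ A : Set ℝ, MeasurableSet A ∧ A ⊆ Set.Icc 0 D ∧ (muh h D A).toReal = v ∧
      p = mink (muh h D) A }

/-!
Test the `CD(K,N)` inequality for `h = h^a_{K,N,D}` with `x₀ = 0`, `x₁ = D` and `t = a/D`, so that
the intermediate point is `a`. On `[0,a]` and on `[a,D]` the density `h` is, up to the factor `f(a)`,
exactly `s(D-x)^{N-1}` resp. `s(x)^{N-1}`: it saturates the `CD` bound towards either endpoint, so
both terms of the right-hand side equal `h(a)^{1/(N-1)}` and the inequality reads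
`2 h(a)^{1/(N-1)} ≤ h(a)^{1/(N-1)}`, impossible since `h(a) = f(a) > 0`. The assumption on `D`
makes `s_{K/(N-1)}` positive on `(0,D]`, so all the quotients make sense and `f(a) > 0`.
-/

open Real Set

lemma continuous_sK (κ : ℝ) : Continuous (sK κ) := by
  unfold sK
  split_ifs <;> fun_prop

lemma sK_pos {κ θ : ℝ} (hθ : 0 < θ) (hπ : 0 < κ → √κ * θ < π) : 0 < sK κ θ := by
  unfold sK
  split_ifs with hκ hκ0
  · exact div_pos (sin_pos_of_pos_of_lt_pi (by positivity) (hπ hκ)) (sqrt_pos.mpr hκ)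
  · exact hθ
  · have hκneg : 0 < -κ := neg_pos.mpr (lt_of_le_of_ne (not_lt.mp hκ) hκ0)
    exact div_pos (sinh_pos_iff.mpr (by positivity)) (sqrt_pos.mpr hκneg)

lemma sK_pos_of_lt_pi_mul_sqrt {K N θ : ℝ} (hN : 1 < N) (hθ : 0 < θ)
    (hθK : 0 < K → θ < π * √((N - 1) / K)) : 0 < sK (K / (N - 1)) θ := by
  refine sK_pos hθ fun hκ => ?_
  have hN1 : 0 < N - 1 := by linarith
  have hK : 0 < K := by simpa [div_pos_iff, hN1, hN1.not_gt] using hκ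
  have hroot : √(K / (N - 1)) * √((N - 1) / K) = 1 := by
    rw [← sqrt_mul hκ.le, div_mul_div_comm, mul_comm K, div_self (by positivity), sqrt_one]
  calc √(K / (N - 1)) * θ < √(K / (N - 1)) * (π * √((N - 1) / K)) := by gcongr; exact hθK hK
    _ = π := by rw [mul_left_comm, hroot, mul_one]

lemma integral_rpow_pos_of_pos_on {f : ℝ → ℝ} {a b p : ℝ} (hab : a < b)
    (hf : ContinuousOn f (Icc a b)) (hpos : ∀ x ∈ Icc a b, 0 < f x) :
    0 < ∫ x in a..b, f x ^ p := by
  have hint : ContinuousOn (fun x => f x ^ p) (uIcc a b) := by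
    rw [uIcc_of_le hab.le]
    exact hf.rpow_const fun x hx => Or.inl (hpos x hx).ne'
  exact intervalIntegral.intervalIntegral_pos_of_pos_on hint.intervalIntegrable
    (fun x hx => rpow_pos_of_pos (hpos x (Ioo_subset_Icc_self hx)) p) hab

lemma fKND_pos {K N D a : ℝ} (hpos : ∀ θ ∈ Ioc 0 D, 0 < sK (K / (N - 1)) θ)
    (ha : a ∈ Ioo 0 D) : 0 < fKND K N D a := by
  obtain ⟨ha0, haD⟩ := ha
  have hcont := continuous_sK (K / (N - 1))
  rw [fKND, if_neg (by rintro (h | h) <;> linarith)]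
  refine inv_pos.mpr (add_pos ?_ ?_)
  · refine integral_rpow_pos_of_pos_on ha0 (by fun_prop) fun y hy => div_pos ?_ ?_
    · exact hpos _ ⟨by linarith [hy.2], by linarith [hy.1]⟩
    · exact hpos _ ⟨by linarith, by linarith⟩
  · exact integral_rpow_pos_of_pos_on haD (by fun_prop) fun y hy =>
      div_pos (hpos _ ⟨by linarith [hy.1], hy.2⟩) (hpos _ ⟨ha0, haD.le⟩)

lemma mul_rpow_rpow_one_div {F b p : ℝ} (hF : 0 ≤ F) (hb : 0 ≤ b) (hp : p ≠ 0) :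
    (F * b ^ p) ^ (1 / p) = F ^ (1 / p) * b := by
  rw [mul_rpow hF (rpow_nonneg hb p), one_div, rpow_rpow_inv hb hp]

section Endpoints

variable {K N D a : ℝ}

lemma hKND_zero (ha : 0 ≤ a) :
    hKND K N D a 0 = fKND K N D a * (sK (K / (N - 1)) D / sK (K / (N - 1)) (D - a)) ^ (N - 1) := by
  rw [hKND, if_pos ha, sub_zero]

lemma hKND_self (hs : sK (K / (N - 1)) (D - a) ≠ 0) : hKND K N D a a = fKND K N D a := by
  rw [hKND, if_pos le_rfl, div_self hs, one_rpow, mul_one]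

lemma hKND_right (ha : a < D) :
    hKND K N D a D = fKND K N D a * (sK (K / (N - 1)) D / sK (K / (N - 1)) a) ^ (N - 1) := by
  rw [hKND, if_neg ha.not_ge]

end Endpoints

/-- Lemma: except in the case `K > 0` with `D = π√((N−1)/K)`, the model density
`h^a_{K,N,D}` is not a `CD(K,N)`-density on `[0,D]`. -/
theorem hKND_not_cd_density (K N D : ℝ) (hN : 1 < N) (hD : 0 < D)
    (hDK : 0 < K → D < Real.pi * Real.sqrt ((N - 1) / K)) :
    ∀ a ∈ Set.Ioo (0:ℝ) D, ¬ IsCDDensity K N (Set.Icc 0 D) (hKND K N D a) := by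
  rintro a ⟨ha0, haD⟩ ⟨-, hcd⟩
  have hs : ∀ θ ∈ Ioc 0 D, 0 < sK (K / (N - 1)) θ := fun θ hθ =>
    sK_pos_of_lt_pi_mul_sqrt hN hθ.1 fun hK => hθ.2.trans_lt (hDK hK)
  have hsa := hs a ⟨ha0, haD.le⟩
  have hsDa := hs (D - a) ⟨by linarith, by linarith⟩
  have hsD := hs D ⟨hD, le_rfl⟩
  have hF := fKND_pos hs ⟨ha0, haD⟩
  have hp : N - 1 ≠ 0 := by linarith
  have hends := hcd 0 ⟨le_rfl, hD.le⟩ D ⟨hD.le, le_rfl⟩ hD (a / D)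
    ⟨by positivity, (div_le_one hD).mpr haD.le⟩
  have e1 : (1 - a / D) * D = D - a := by field_simp
  have e2 : a / D * D = a := by field_simp
  rw [sub_zero, e1, e2, mul_zero, zero_add, hKND_zero ha0.le, hKND_self hsDa.ne', hKND_right haD,
    mul_rpow_rpow_one_div hF.le (by positivity) hp,
    mul_rpow_rpow_one_div hF.le (by positivity) hp] at hends
  set s := sK (K / (N - 1))
  set G := fKND K N D a ^ (1 / (N - 1))
  have hsum : s (D - a) / s D * (G * (s D / s (D - a))) + s a / s D * (G * (s D / s a)) = 2 * G := by
    field_simp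
    ring
  linarith [rpow_pos_of_pos hF (1 / (N - 1))]

end
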